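/- Let γ > β > 0 and set δ = (β+γ)/2. For every h lying in H_γ with weak derivative g and with h(∞) := lim_{x→∞} h(x) = 0, the Fourier transform of the even reflection F(x) = h(|x|) e^{(β/2)|x|} satisfies the uniform bound sup_{ξ∈ℝ} |(𝓕F)(ξ)| ≤ (2/√(2π)) · (1/√((δ−β) δ (γ−δ))) · ‖h‖_γ. In particular, for each fixed ξ ∈ ℝ, the map h ↦ (𝓕F)(ξ) is a bounded linear functional with respect to the H_γ-norm. -/

import Mathlib

/-!
Since `h(∞) = 0`, we have `h x = -∫_x^∞ g`, and Cauchy–Schwarz against the weight `e^{γt}` gives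
`|h x| ≤ √(∫₀^∞ g² e^{γt} / γ) e^{-γx/2}`. So `|F x|` is dominated by a multiple of
`e^{-(γ-β)|x|/2}`, whose integral bounds `|𝓕F ξ|` uniformly in `ξ`. The constant comes from
`δ - β = γ - δ = (γ - β)/2` and `δ ≤ γ`.
-/

open MeasureTheory Real Filter Set Complex

section WeightedCauchySchwarz

variable {α : Type*} [MeasurableSpace α] {μ : Measure α} {f w : α → ℝ}

lemma memLp_two_abs_mul_sqrt (hf : AEStronglyMeasurable f μ) (hw : AEMeasurable w μ)
    (hw_pos : ∀ x, 0 < w x) (hfw : Integrable (fun x => f x ^ 2 * w x) μ) :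
    MemLp (fun x => |f x| * √(w x)) 2 μ := by
  refine (memLp_two_iff_integrable_sq (hf.norm.mul hw.sqrt.aestronglyMeasurable)).2 ?_
  refine hfw.congr (ae_of_all _ fun x => ?_)
  simp only [Pi.mul_apply, Real.norm_eq_abs, mul_pow, sq_abs, sq_sqrt (hw_pos x).le]

lemma memLp_two_inv_sqrt (hw : AEMeasurable w μ) (hw_pos : ∀ x, 0 < w x)
    (hw_inv : Integrable (fun x => (w x)⁻¹) μ) :
    MemLp (fun x => (√(w x))⁻¹) 2 μ := by
  refine (memLp_two_iff_integrable_sq hw.sqrt.inv.aestronglyMeasurable).2 ?_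
  refine hw_inv.congr (ae_of_all _ fun x => ?_)
  simp only [Pi.inv_apply, inv_pow, sq_sqrt (hw_pos x).le]

lemma integrable_of_integrable_sq_mul_of_integrable_inv (hf : AEStronglyMeasurable f μ)
    (hw : AEMeasurable w μ) (hw_pos : ∀ x, 0 < w x)
    (hfw : Integrable (fun x => f x ^ 2 * w x) μ) (hw_inv : Integrable (fun x => (w x)⁻¹) μ) :
    Integrable f μ := by
  have hprod := (memLp_two_abs_mul_sqrt hf hw hw_pos hfw).integrable_mul
    (memLp_two_inv_sqrt hw hw_pos hw_inv)
  refine (integrable_norm_iff hf).1 (hprod.congr (ae_of_all _ fun x => ?_))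
  simp only [Pi.mul_apply, Real.norm_eq_abs]
  exact mul_inv_cancel_right₀ (sqrt_pos.2 (hw_pos x)).ne' _

theorem abs_integral_le_sqrt_mul_sqrt (hf : AEStronglyMeasurable f μ)
    (hw : AEMeasurable w μ) (hw_pos : ∀ x, 0 < w x)
    (hfw : Integrable (fun x => f x ^ 2 * w x) μ) (hw_inv : Integrable (fun x => (w x)⁻¹) μ) :
    |∫ x, f x ∂μ| ≤ √(∫ x, f x ^ 2 * w x ∂μ) * √(∫ x, (w x)⁻¹ ∂μ) := by
  have holder := integral_mul_le_Lp_mul_Lq_of_nonneg Real.HolderConjugate.two_two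
    (f := fun x => |f x| * √(w x)) (g := fun x => (√(w x))⁻¹)
    (ae_of_all _ fun x => by positivity) (ae_of_all _ fun x => by positivity)
    (by simpa using memLp_two_abs_mul_sqrt hf hw hw_pos hfw)
    (by simpa using memLp_two_inv_sqrt hw hw_pos hw_inv)
  simp only [mul_inv_cancel_right₀ (sqrt_pos.2 (hw_pos _)).ne', rpow_two, mul_pow, sq_abs,
    inv_pow, sq_sqrt (hw_pos _).le, ← sqrt_eq_rpow] at holder
  exact abs_integral_le_integral_abs.trans holder

end WeightedCauchySchwarz

section ExponentialWeight

variable {γ : ℝ} {g : ℝ → ℝ}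

lemma integrableOn_inv_exp_mul_Ioi (hγ : 0 < γ) (a : ℝ) :
    IntegrableOn (fun t => (Real.exp (γ * t))⁻¹) (Ioi a) := by
  simpa only [← Real.exp_neg, ← neg_mul] using
    integrableOn_exp_mul_Ioi (neg_neg_iff_pos.2 hγ) a

lemma integral_inv_exp_mul_Ioi (hγ : 0 < γ) (a : ℝ) :
    ∫ t in Ioi a, (Real.exp (γ * t))⁻¹ = Real.exp (-γ * a) / γ := by
  simp only [← Real.exp_neg, ← neg_mul]
  rw [integral_exp_mul_Ioi (neg_neg_iff_pos.2 hγ), neg_div_neg_eq]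

lemma integrableOn_Ioi_of_integrableOn_sq_mul_exp (hγ : 0 < γ) (hg : Measurable g) {a : ℝ}
    (hg_int : IntegrableOn (fun t => g t ^ 2 * Real.exp (γ * t)) (Ioi a)) :
    IntegrableOn g (Ioi a) :=
  integrable_of_integrable_sq_mul_of_integrable_inv hg.aestronglyMeasurable
    (by fun_prop) (fun _ => Real.exp_pos _) hg_int (integrableOn_inv_exp_mul_Ioi hγ a)

lemma abs_setIntegral_Ioi_le_of_integrableOn_sq_mul_exp (hγ : 0 < γ) (hg : Measurable g)
    {a : ℝ} (hg_int : IntegrableOn (fun t => g t ^ 2 * Real.exp (γ * t)) (Ioi a)) :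
    |∫ t in Ioi a, g t| ≤
      √(∫ t in Ioi a, g t ^ 2 * Real.exp (γ * t)) * √(Real.exp (-γ * a) / γ) := by
  rw [← integral_inv_exp_mul_Ioi hγ a]
  exact abs_integral_le_sqrt_mul_sqrt hg.aestronglyMeasurable (by fun_prop)
    (fun _ => Real.exp_pos _) hg_int (integrableOn_inv_exp_mul_Ioi hγ a)

end ExponentialWeight

lemma eq_neg_setIntegral_Ioi_of_tendsto_atTop {h g : ℝ → ℝ} (hg : IntegrableOn g (Ioi 0))
    (hFTC : ∀ x ≥ (0 : ℝ), h x = h 0 + ∫ t in (0:ℝ)..x, g t)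
    (hlim : Tendsto h atTop (nhds 0)) {x : ℝ} (hx : 0 ≤ x) :
    h x = -∫ t in Ioi x, g t := by
  have hint : ∀ y ≥ (0 : ℝ), IntervalIntegrable g volume 0 y := fun y hy =>
    (intervalIntegrable_iff_integrableOn_Ioc_of_le hy).2 (hg.mono_set Ioc_subset_Ioi_self)
  have hincr : ∀ᶠ y in atTop, h x + ∫ t in x..y, g t = h y := by
    filter_upwards [eventually_ge_atTop 0] with y hy
    rw [hFTC x hx, hFTC y hy,
      ← intervalIntegral.integral_interval_sub_left (hint y hy) (hint x hx)]
    ring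
  have hlim' : Tendsto h atTop (nhds (h x + ∫ t in Ioi x, g t)) :=
    (tendsto_const_nhds.add (intervalIntegral_tendsto_integral_Ioi x
      (hg.mono_set (Ioi_subset_Ioi hx)) tendsto_id)).congr' hincr
  linarith [tendsto_nhds_unique hlim' hlim]

lemma abs_le_sqrt_div_mul_exp_of_integrableOn_sq_mul_exp {γ : ℝ} {h g : ℝ → ℝ} (hγ : 0 < γ)
    (hg : Measurable g) (hg_int : IntegrableOn (fun t => g t ^ 2 * Real.exp (γ * t)) (Ioi 0))
    (hFTC : ∀ x ≥ (0 : ℝ), h x = h 0 + ∫ t in (0:ℝ)..x, g t)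
    (hlim : Tendsto h atTop (nhds 0)) {x : ℝ} (hx : 0 ≤ x) :
    |h x| ≤ √((∫ t in Ioi 0, g t ^ 2 * Real.exp (γ * t)) / γ) * Real.exp (-(γ / 2) * x) := by
  rw [eq_neg_setIntegral_Ioi_of_tendsto_atTop
    (integrableOn_Ioi_of_integrableOn_sq_mul_exp hγ hg hg_int) hFTC hlim hx, abs_neg]
  have htail : ∫ t in Ioi x, g t ^ 2 * Real.exp (γ * t) ≤
      ∫ t in Ioi 0, g t ^ 2 * Real.exp (γ * t) :=
    setIntegral_mono_set hg_int (ae_of_all _ fun t => by positivity)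
      (Ioi_subset_Ioi hx).eventuallyLE
  have hexp : Real.exp (-γ * x) = Real.exp (-(γ / 2) * x) ^ 2 := by
    rw [← Real.exp_nat_mul]; ring_nf
  calc |∫ t in Ioi x, g t|
      ≤ √(∫ t in Ioi x, g t ^ 2 * Real.exp (γ * t)) * √(Real.exp (-γ * x) / γ) :=
        abs_setIntegral_Ioi_le_of_integrableOn_sq_mul_exp hγ hg
          (hg_int.mono_set (Ioi_subset_Ioi hx))
    _ ≤ √(∫ t in Ioi 0, g t ^ 2 * Real.exp (γ * t)) * √(Real.exp (-γ * x) / γ) := by gcongr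
    _ = _ := by
        rw [hexp, sqrt_div' _ hγ.le, sqrt_div' _ hγ.le, sqrt_sq (Real.exp_pos _).le]
        ring

/- No integrability of `H` is assumed: if `|H|` is not integrable, its integral is `0`. -/
lemma setIntegral_Ioi_abs_le_of_abs_le_mul_exp {H : ℝ → ℝ} {C a : ℝ} (ha : 0 < a)
    (hH : ∀ t > 0, |H t| ≤ C * Real.exp (-a * t)) :
    ∫ t in Ioi 0, |H t| ≤ C / a := by
  have hbound : ∫ t in Ioi 0, |H t| ≤ ∫ t in Ioi 0, C * Real.exp (-a * t) :=
    integral_mono_of_nonneg (ae_of_all _ fun t => abs_nonneg _)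
      ((integrableOn_exp_mul_Ioi (neg_neg_iff_pos.2 ha) 0).const_mul C)
      ((ae_restrict_iff' measurableSet_Ioi).2 (ae_of_all _ hH))
  rwa [integral_const_mul, integral_exp_mul_Ioi (neg_neg_iff_pos.2 ha), mul_zero,
    Real.exp_zero, neg_div_neg_eq, ← div_eq_mul_one_div] at hbound

lemma norm_integral_comp_abs_mul_exp_le (H : ℝ → ℝ) (ξ : ℝ) :
    ‖∫ x : ℝ, (H |x| : ℂ) * Complex.exp (-(Complex.I * ξ * x))‖ ≤
      2 * ∫ t in Ioi 0, |H t| := by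
  have hnorm : ∀ x : ℝ,
      ‖(H |x| : ℂ) * Complex.exp (-(Complex.I * ξ * x))‖ = |H (|x|)| := by
    intro x
    simp [Complex.norm_exp]
  calc ‖∫ x : ℝ, (H |x| : ℂ) * Complex.exp (-(Complex.I * ξ * x))‖
      ≤ ∫ x : ℝ, ‖(H |x| : ℂ) * Complex.exp (-(Complex.I * ξ * x))‖ :=
        norm_integral_le_integral_norm _
    _ = 2 * ∫ t in Ioi 0, |H t| := by
        simp only [hnorm]
        exact integral_comp_abs (f := fun t => |H t|)

/-- If `γ > β > 0`, `δ = (β+γ)/2`, and `h` lies in `H_γ` with weak derivative `g` and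
`h(∞) = 0`, then the Fourier transform of the even reflection `F(x) = h(|x|)e^{(β/2)|x|}`
satisfies `sup_ξ |(𝓕F)(ξ)| ≤ (2/√(2π)) (1/√((δ-β)δ(γ-δ))) ‖h‖_γ`; in particular, for each
fixed `ξ` the map `h ↦ (𝓕F)(ξ)` is a bounded linear functional w.r.t. the `H_γ`-norm. -/
theorem fourier_reflection_uniform_bound
    (β γ δ : ℝ) (hβ : 0 < β) (hβγ : β < γ) (hδ : δ = (β + γ) / 2)
    (h g : ℝ → ℝ)
    (hg_meas : Measurable g)
    (hg_int : IntegrableOn (fun t => g t ^ 2 * Real.exp (γ * t)) (Set.Ioi 0))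
    (hFTC : ∀ x ≥ (0 : ℝ), h x = h 0 + ∫ t in (0:ℝ)..x, g t)
    (hlim : Tendsto h atTop (nhds 0)) :
    ∀ ξ : ℝ,
      ‖((Real.sqrt (2 * Real.pi) : ℂ))⁻¹ *
          ∫ x : ℝ, (↑(h |x| * Real.exp (β / 2 * |x|)) : ℂ) * Complex.exp (-(Complex.I * ξ * x))‖
        ≤ (2 / Real.sqrt (2 * Real.pi)) * (1 / Real.sqrt ((δ - β) * δ * (γ - δ))) *
            Real.sqrt (|h 0| ^ 2 + ∫ t in Set.Ioi (0:ℝ), g t ^ 2 * Real.exp (γ * t)) := by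
  intro ξ
  have hγ : 0 < γ := hβ.trans hβγ
  set I := ∫ t in Ioi 0, g t ^ 2 * Real.exp (γ * t)
  have hdecay : ∀ t > 0,
      |h t * Real.exp (β / 2 * t)| ≤ √(I / γ) * Real.exp (-((γ - β) / 2) * t) := by
    intro t ht
    have hexp : Real.exp (-((γ - β) / 2) * t) =
        Real.exp (-(γ / 2) * t) * Real.exp (β / 2 * t) := by
      rw [← Real.exp_add]; ring_nf
    rw [abs_mul, abs_of_pos (Real.exp_pos _), hexp, ← mul_assoc]
    gcongr
    exact abs_le_sqrt_div_mul_exp_of_integrableOn_sq_mul_exp hγ hg_meas hg_int hFTC hlim ht.le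
  have hL1 := setIntegral_Ioi_abs_le_of_abs_le_mul_exp (by linarith) hdecay
  have hconst : √(I / γ) / ((γ - β) / 2) ≤
      1 / √((δ - β) * δ * (γ - δ)) * √(|h 0| ^ 2 + I) := by
    have hδ0 : 0 < δ := by linarith
    rw [show (δ - β) * δ * (γ - δ) = δ * ((γ - β) / 2) ^ 2 by rw [hδ]; ring,
      sqrt_mul hδ0.le, sqrt_sq (by linarith), one_div_mul_eq_div, ← div_div,
      ← sqrt_div' _ hδ0.le]
    gcongr
    · exact le_add_of_nonneg_left (sq_nonneg _)
    · linarith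
  calc _ = (√(2 * π))⁻¹ * ‖∫ x : ℝ, (↑(h |x| * Real.exp (β / 2 * |x|)) : ℂ) *
          Complex.exp (-(Complex.I * ξ * x))‖ := by
        rw [norm_mul, norm_inv, Complex.norm_real, Real.norm_of_nonneg (sqrt_nonneg _)]
    _ ≤ (√(2 * π))⁻¹ * (2 * (√(I / γ) / ((γ - β) / 2))) := by
        gcongr
        exact (norm_integral_comp_abs_mul_exp_le (fun t => h t * Real.exp (β / 2 * t)) ξ).trans
          (by linarith)
    _ ≤ (√(2 * π))⁻¹ * (2 * (1 / √((δ - β) * δ * (γ - δ)) * √(|h 0| ^ 2 + I))) := by gcongr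
    _ = _ := by ring
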